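/- arXiv:math/9807052 — 5 statements merged into one kernel-verified Lean document; each statement's English description precedes it below -/
import Mathlib

section
/- The 2×2 matrix e_s = (1/(1+s²)) · [[1-ζ, ξ], [-η, s² + q^{-2}ζ]] over SU_q(2) satisfies e_s² = e_s, i.e., e_s is an idempotent (projector). -/
set_option maxRecDepth 100000
set_option maxHeartbeats 4000000

open scoped TensorProduct

/-- ξ = s(α² - q⁻¹β²) + (s²-1)q⁻¹αβ -/
def xiE {k A : Type*} [Field k] [Ring A] [Algebra k A] (q s : k) (α β : A) : A :=
  s • (α^2) - (s*q⁻¹) • (β^2) + ((s^2-1)*q⁻¹) • (α*β)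

/-- η = s(qγ² - δ²) + (s²-1)γδ -/
def etaE {k A : Type*} [Field k] [Ring A] [Algebra k A] (q s : k) (γ δ : A) : A :=
  (s*q) • (γ^2) - s • (δ^2) + (s^2-1) • (γ*δ)

/-- ζ = s(qαγ - βδ) + (s²-1)qβγ -/
def zetaE {k A : Type*} [Field k] [Ring A] [Algebra k A] (q s : k) (α β γ δ : A) : A :=
  (s*q) • (α*γ) - s • (β*δ) + ((s^2-1)*q) • (β*γ)

/-- The projector e_s = (1/(1+s²)) [[1-ζ, ξ],[-η, s²+q⁻²ζ]] -/
def esMat {k A : Type*} [Field k] [Ring A] [Algebra k A] (q s : k) (α β γ δ : A) :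
    Matrix (Fin 2) (Fin 2) A :=
  (1+s^2)⁻¹ • !![1 - zetaE q s α β γ δ, xiE q s α β;
                 -etaE q s γ δ, (s^2) • (1:A) + (q^2)⁻¹ • zetaE q s α β γ δ]

/-- The right ideal J_s = {ξ-s, η+s, ζ}·SU_q(2) -/
def Jideal {k A : Type*} [Field k] [Ring A] [Algebra k A] (q s : k) (α β γ δ : A) : Set A :=
  {z | ∃ p₁ p₂ p₃ : A, z = (xiE q s α β - s • 1) * p₁ + (etaE q s γ δ + s • 1) * p₂ +
      zetaE q s α β γ δ * p₃}

theorem stmt2 {k A : Type*} [Field k] [Ring A] [Algebra k A]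
    (q s : k) (α β γ δ : A)
    (h1 : α*β = q • (β*α)) (h2 : α*γ = q • (γ*α)) (h3 : β*γ = γ*β)
    (h4 : β*δ = q • (δ*β)) (h5 : γ*δ = q • (δ*γ))
    (h6 : α*δ = δ*α + (q - q⁻¹) • (β*γ)) (h7 : α*δ - q • (β*γ) = 1)
    (hq : q ≠ 0) (hs : (1:k) + s^2 ≠ 0) :
    esMat q s α β γ δ * esMat q s α β γ δ = esMat q s α β γ δ := by
  have b6 : α*δ = 1 + q•(β*γ) := by rw [sub_eq_iff_eq_add.mp h7]
  have b7 : δ*α = 1 + q⁻¹•(β*γ) := by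
    have e : δ*α = α*δ - (q - q⁻¹) • (β*γ) := by rw [h6]; abel
    rw [e, b6]; match_scalars <;> field_simp <;> ring
  have b3 : γ*β = β*γ := h3.symm
  have b4 : δ*β = q⁻¹•(β*δ) := by rw [h4, smul_smul, inv_mul_cancel₀ hq, one_smul]
  have b5 : δ*γ = q⁻¹•(γ*δ) := by rw [h5, smul_smul, inv_mul_cancel₀ hq, one_smul]
  have c1 : ∀ x : A, α*(β*x) = q•(β*(α*x)) := fun x => by
    rw [← mul_assoc, h1, smul_mul_assoc, mul_assoc]
  have c2 : ∀ x : A, α*(γ*x) = q•(γ*(α*x)) := fun x => by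
    rw [← mul_assoc, h2, smul_mul_assoc, mul_assoc]
  have c3 : ∀ x : A, γ*(β*x) = β*(γ*x) := fun x => by
    rw [← mul_assoc, b3, mul_assoc]
  have c4 : ∀ x : A, δ*(β*x) = q⁻¹•(β*(δ*x)) := fun x => by
    rw [← mul_assoc, b4, smul_mul_assoc, mul_assoc]
  have c5 : ∀ x : A, δ*(γ*x) = q⁻¹•(γ*(δ*x)) := fun x => by
    rw [← mul_assoc, b5, smul_mul_assoc, mul_assoc]
  have c6 : ∀ x : A, α*(δ*x) = x + q•(β*(γ*x)) := fun x => by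
    rw [← mul_assoc, b6, add_mul, one_mul, smul_mul_assoc, mul_assoc]
  have c7 : ∀ x : A, δ*(α*x) = x + q⁻¹•(β*(γ*x)) := fun x => by
    rw [← mul_assoc, b7, add_mul, one_mul, smul_mul_assoc, mul_assoc]
  suffices key :
      (!![1 - zetaE q s α β γ δ, xiE q s α β;
          -etaE q s γ δ, (s^2) • (1:A) + (q^2)⁻¹ • zetaE q s α β γ δ] :
        Matrix (Fin 2) (Fin 2) A) *
      !![1 - zetaE q s α β γ δ, xiE q s α β;
          -etaE q s γ δ, (s^2) • (1:A) + (q^2)⁻¹ • zetaE q s α β γ δ] =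
      (1+s^2) • !![1 - zetaE q s α β γ δ, xiE q s α β;
          -etaE q s γ δ, (s^2) • (1:A) + (q^2)⁻¹ • zetaE q s α β γ δ] by
    rw [esMat, Matrix.smul_mul, Matrix.mul_smul, smul_smul, key, smul_smul]
    congr 1
    field_simp
  rw [Matrix.mul_fin_two, ← Matrix.ext_iff]
  intro i j
  fin_cases i <;> fin_cases j <;> simp [Matrix.smul_apply] <;>
    · simp only [xiE, etaE, zetaE, pow_two, mul_add, add_mul, mul_sub, sub_mul,
        neg_mul, mul_neg, smul_neg, neg_neg,
        smul_mul_assoc, mul_smul_comm, smul_smul, smul_add, smul_sub, mul_assoc,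
        mul_one, one_mul, h1, h2, b3, b6, b7, c1, c2, c3, c4, c5, c6, c7, b4, b5]
      match_scalars <;> (try ring_nf) <;> (try field_simp) <;> (try ring_nf) <;> (try field_simp) <;> (try ring_nf) <;> (try field_simp) <;> (try ring1)
end

section
/- The projector e_s admits the rank-one factorization e_s = (1/(1+s²)) · v · w, where v is the column vector (α+sβ, γ+sδ)ᵗ and w is the row vector (δ - qsγ, sα - q^{-1}β); that is, each entry (e_s)_{ij} equals (1/(1+s²)) v_i w_j. -/
open scoped TensorProduct

section Factorization

variable {k A : Type*} [Field k] [Ring A] [Algebra k A] {q : k} (s : k) {α β γ δ : A}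

theorem mul_eq_inv_smul_of_mul_eq_smul {x y : A} (hq : q ≠ 0) (h : x * y = q • (y * x)) :
    y * x = q⁻¹ • (x * y) := by
  rw [h, smul_smul, inv_mul_cancel₀ hq, one_smul]

theorem one_sub_zetaE_eq_mul (h7 : α*δ - q • (β*γ) = 1) :
    1 - zetaE q s α β γ δ = (α + s • β) * (δ - (q*s) • γ) := by
  have had : α*δ = 1 + q • (β*γ) := by rw [← h7]; abel
  simp only [zetaE, mul_sub, add_mul, smul_mul_assoc, mul_smul_comm, had]
  match_scalars <;> ring

theorem xiE_eq_mul (hq : q ≠ 0) (h1 : α*β = q • (β*α)) :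
    xiE q s α β = (α + s • β) * (s • α - q⁻¹ • β) := by
  simp only [xiE, pow_two, mul_sub, add_mul, smul_mul_assoc, mul_smul_comm, smul_smul,
    mul_eq_inv_smul_of_mul_eq_smul hq h1]
  match_scalars <;> ring

theorem neg_etaE_eq_mul (hq : q ≠ 0) (h5 : γ*δ = q • (δ*γ)) :
    -etaE q s γ δ = (γ + s • δ) * (δ - (q*s) • γ) := by
  simp only [etaE, pow_two, mul_sub, add_mul, smul_mul_assoc, mul_smul_comm, smul_smul,
    mul_eq_inv_smul_of_mul_eq_smul hq h5]
  match_scalars <;> field_simp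
  ring

theorem sq_smul_one_add_zetaE_eq_mul (hq : q ≠ 0) (h2 : α*γ = q • (γ*α)) (h3 : β*γ = γ*β)
    (h4 : β*δ = q • (δ*β)) (h6 : α*δ = δ*α + (q - q⁻¹) • (β*γ)) (h7 : α*δ - q • (β*γ) = 1) :
    s^2 • (1:A) + (q^2)⁻¹ • zetaE q s α β γ δ = (γ + s • δ) * (s • α - q⁻¹ • β) := by
  have hda : δ*α = 1 + q⁻¹ • (β*γ) := by
    rw [← h7, h6]
    module
  simp only [zetaE, mul_sub, add_mul, smul_mul_assoc, mul_smul_comm, smul_smul, smul_add,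
    smul_sub, mul_eq_inv_smul_of_mul_eq_smul hq h2, mul_eq_inv_smul_of_mul_eq_smul hq h4, ← h3, hda]
  match_scalars <;> field_simp

end Factorization

theorem stmt3_general {k A : Type*} [Field k] [Ring A] [Algebra k A]
    (q s : k) (α β γ δ : A)
    (h1 : α*β = q • (β*α)) (h2 : α*γ = q • (γ*α)) (h3 : β*γ = γ*β)
    (h4 : β*δ = q • (δ*β)) (h5 : γ*δ = q • (δ*γ))
    (h6 : α*δ = δ*α + (q - q⁻¹) • (β*γ)) (h7 : α*δ - q • (β*γ) = 1)
    (hq : q ≠ 0) :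
    ∀ i j : Fin 2, esMat q s α β γ δ i j =
      (1 + s^2)⁻¹ • (![α + s • β, γ + s • δ] i * ![δ - (q*s) • γ, s • α - q⁻¹ • β] j) := by
  intro i j
  fin_cases i <;> fin_cases j
  · exact congrArg _ (one_sub_zetaE_eq_mul s h7)
  · exact congrArg _ (xiE_eq_mul s hq h1)
  · exact congrArg _ (neg_etaE_eq_mul s hq h5)
  · exact congrArg _ (sq_smul_one_add_zetaE_eq_mul s hq h2 h3 h4 h6 h7)

theorem stmt3 {k A : Type*} [Field k] [Ring A] [Algebra k A]
    (q s : k) (α β γ δ : A)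
    (h1 : α*β = q • (β*α)) (h2 : α*γ = q • (γ*α)) (h3 : β*γ = γ*β)
    (h4 : β*δ = q • (δ*β)) (h5 : γ*δ = q • (δ*γ))
    (h6 : α*δ = δ*α + (q - q⁻¹) • (β*γ)) (h7 : α*δ - q • (β*γ) = 1)
    (hq : q ≠ 0) (hs : (1:k) + s^2 ≠ 0) :
    ∀ i j : Fin 2, esMat q s α β γ δ i j =
      (1 + s^2)⁻¹ • (![α + s • β, γ + s • δ] i * ![δ - (q*s) • γ, s • α - q⁻¹ • β] j) :=
  stmt3_general q s α β γ δ h1 h2 h3 h4 h5 h6 h7 hq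
end

section
/- The map Θ_s : (S²_{qs})² e_s → E_s sending (x,y)e_s to x(α+sβ) + y(γ+sδ) is a well-defined isomorphism of left S²_{qs}-modules, where E_s = { x(α+sβ) + y(γ+sδ) : x, y ∈ S²_{qs} } ⊆ SU_q(2). In particular, E_s is a finitely generated projective left S²_{qs}-module. -/
open scoped TensorProduct

section Aux
variable {k A : Type*} [Field k] [Ring A] [Algebra k A]

theorem myaux (S : Subalgebra k A) (u w : Fin 2 → A) (c : k)
    (r : Fin 2 → (Fin 2 → A))
    (hrS : ∀ i j, r i j ∈ S)
    (hPhi : ∀ i, r i 0 * u 0 + r i 1 * u 1 = u i)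
    (hPsi : ∀ i j, c • (u i * w j) = r i j) :
    ∃ Θ : (Submodule.span ↥S {r 0, r 1}) ≃ₗ[↥S] (Submodule.span ↥S {u 0, u 1} : Submodule ↥S A),
      (∀ p : (Submodule.span ↥S {r 0, r 1}),
        (Θ p : A) = (p : Fin 2 → A) 0 * u 0 + (p : Fin 2 → A) 1 * u 1) ∧
      Module.Finite ↥S (Submodule.span ↥S {u 0, u 1} : Submodule ↥S A) ∧
      Module.Projective ↥S (Submodule.span ↥S {u 0, u 1} : Submodule ↥S A) := by
  classical
  set P : Submodule ↥S (Fin 2 → A) := Submodule.span ↥S {r 0, r 1} with hP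
  set Es : Submodule ↥S A := Submodule.span ↥S {u 0, u 1} with hEs
  have hsmul : ∀ (x : ↥S) (a : A), x • a = (x : A) * a := fun x a => rfl
  -- the linear maps
  let Φ : (Fin 2 → A) →ₗ[↥S] A :=
    { toFun := fun p => p 0 * u 0 + p 1 * u 1
      map_add' := fun p q => by simp only [Pi.add_apply, add_mul]; abel
      map_smul' := fun x p => by
        simp only [Pi.smul_apply, hsmul, RingHom.id_apply, mul_add, mul_assoc] }
  let Ψ : A →ₗ[↥S] (Fin 2 → A) :=
    { toFun := fun a j => c • (a * w j)
      map_add' := fun a b => by funext j; simp [add_mul, smul_add]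
      map_smul' := fun x a => by
        funext j
        simp only [hsmul, RingHom.id_apply, Pi.smul_apply, mul_assoc, mul_smul_comm] }
  have hΦr : ∀ i, Φ (r i) = u i := hPhi
  have hΨu : ∀ i, Ψ (u i) = r i := fun i => funext (hPsi i)
  have hru : ∀ i, u i ∈ Es := by
    intro i
    fin_cases i <;> exact Submodule.subset_span (by simp)
  have hrP : ∀ i, r i ∈ P := by
    intro i
    fin_cases i <;> exact Submodule.subset_span (by simp)
  have hΦP : ∀ x ∈ P, Φ x ∈ Es := by
    intro x hx
    refine Submodule.span_induction ?_ ?_ ?_ ?_ hx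
    · rintro y (rfl | rfl)
      · rw [show Φ (r 0) = u 0 from hΦr 0]; exact hru 0
      · rw [show Φ (r 1) = u 1 from hΦr 1]; exact hru 1
    · simp
    · intro y z _ _ hy hz; rw [map_add]; exact Es.add_mem hy hz
    · intro t y _ hy; rw [map_smul]; exact Es.smul_mem t hy
  have hΨE : ∀ a ∈ Es, Ψ a ∈ P := by
    intro a ha
    refine Submodule.span_induction ?_ ?_ ?_ ?_ ha
    · rintro y (rfl | rfl)
      · rw [hΨu 0]; exact hrP 0
      · rw [hΨu 1]; exact hrP 1
    · simp
    · intro y z _ _ hy hz; rw [map_add]; exact P.add_mem hy hz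
    · intro t y _ hy; rw [map_smul]; exact P.smul_mem t hy
  have hPinv : ∀ x ∈ P, Ψ (Φ x) = x := by
    intro x hx
    refine Submodule.span_induction ?_ ?_ ?_ ?_ hx
    · rintro y (rfl | rfl)
      · rw [show Φ (r 0) = u 0 from hΦr 0, hΨu 0]
      · rw [show Φ (r 1) = u 1 from hΦr 1, hΨu 1]
    · simp
    · intro y z _ _ hy hz; rw [map_add, map_add, hy, hz]
    · intro t y _ hy; rw [map_smul, map_smul, hy]
  have hEinv : ∀ a ∈ Es, Φ (Ψ a) = a := by
    intro a ha
    refine Submodule.span_induction ?_ ?_ ?_ ?_ ha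
    · rintro y (rfl | rfl)
      · rw [hΨu 0, hΦr 0]
      · rw [hΨu 1, hΦr 1]
    · simp
    · intro y z _ _ hy hz; rw [map_add, map_add, hy, hz]
    · intro t y _ hy; rw [map_smul, map_smul, hy]
  let Φ' : P →ₗ[↥S] Es := Φ.restrict hΦP
  let Ψ' : Es →ₗ[↥S] P := Ψ.restrict hΨE
  have hcomp1 : Φ'.comp Ψ' = LinearMap.id := by
    apply LinearMap.ext
    intro a
    exact Subtype.ext (hEinv a a.2)
  have hcomp2 : Ψ'.comp Φ' = LinearMap.id := by
    apply LinearMap.ext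
    intro x
    exact Subtype.ext (hPinv x x.2)
  refine ⟨LinearEquiv.ofLinear Φ' Ψ' hcomp1 hcomp2, fun p => rfl, ?_, ?_⟩
  · exact Module.Finite.span_of_finite _ (Set.toFinite _)
  · -- projectivity: Es is a direct summand of (Fin 2 → ↥S)
    let incl : (Fin 2 → ↥S) →ₗ[↥S] (Fin 2 → A) :=
      { toFun := fun x j => (x j : A)
        map_add' := fun x y => by funext j; simp
        map_smul' := fun t x => rfl }
    have hπ : ∀ x : Fin 2 → ↥S, Φ (incl x) ∈ Es := by
      intro x
      have : Φ (incl x) = (x 0) • u 0 + (x 1) • u 1 := by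
        simp only [hsmul]; rfl
      rw [this]
      exact Es.add_mem (Es.smul_mem _ (hru 0)) (Es.smul_mem _ (hru 1))
    let π : (Fin 2 → ↥S) →ₗ[↥S] Es := (Φ.comp incl).codRestrict Es hπ
    have hσS : ∀ a ∈ Es, ∀ j, c • (a * w j) ∈ S := by
      intro a ha
      refine Submodule.span_induction ?_ ?_ ?_ ?_ ha
      · rintro y (rfl | rfl) j
        · rw [hPsi 0 j]; exact hrS 0 j
        · rw [hPsi 1 j]; exact hrS 1 j
      · intro j
        simp only [zero_mul, smul_zero]
        exact S.zero_mem
      · intro y z _ _ hy hz j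
        have : c • ((y + z) * w j) = c • (y * w j) + c • (z * w j) := by
          rw [add_mul, smul_add]
        rw [this]; exact S.add_mem (hy j) (hz j)
      · intro t y _ hy j
        have : c • ((t • y) * w j) = (t : A) * (c • (y * w j)) := by
          rw [hsmul, mul_assoc, mul_smul_comm]
        rw [this]; exact S.mul_mem t.2 (hy j)
    let σ : Es →ₗ[↥S] (Fin 2 → ↥S) :=
      { toFun := fun a j => ⟨c • ((a : A) * w j), hσS a a.2 j⟩
        map_add' := fun a b => by
          funext j
          apply Subtype.ext
          show c • (((a : A) + b) * w j) = c • ((a : A) * w j) + c • ((b : A) * w j)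
          rw [add_mul, smul_add]
        map_smul' := fun t a => by
          funext j
          apply Subtype.ext
          show c • (((t : A) * a) * w j) = (t : A) * (c • ((a : A) * w j))
          rw [mul_assoc, mul_smul_comm] }
    have hsplit : π.comp σ = LinearMap.id := by
      apply LinearMap.ext
      intro a
      apply Subtype.ext
      show Φ (incl (σ a)) = (a : A)
      have h1 : incl (σ a) = Ψ (a : A) := rfl
      rw [h1]
      exact hEinv a a.2
    exact Module.Projective.of_split σ π hsplit
end Aux

theorem stmt6 {k A : Type*} [Field k] [Ring A] [Algebra k A]
    (q s : k) (α β γ δ : A)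
    (h1 : α*β = q • (β*α)) (h2 : α*γ = q • (γ*α)) (h3 : β*γ = γ*β)
    (h4 : β*δ = q • (δ*β)) (h5 : γ*δ = q • (δ*γ))
    (h6 : α*δ = δ*α + (q - q⁻¹) • (β*γ)) (h7 : α*δ - q • (β*γ) = 1)
    (hq : q ≠ 0) (hs : (1:k) + s^2 ≠ 0) :
    letI S := Algebra.adjoin k {xiE q s α β, etaE q s γ δ, zetaE q s α β γ δ}
    letI P : Submodule ↥S (Fin 2 → A) :=
      Submodule.span ↥S {(fun j => esMat q s α β γ δ 0 j), (fun j => esMat q s α β γ δ 1 j)}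
    letI Es : Submodule ↥S A := Submodule.span ↥S {α + s • β, γ + s • δ}
    ∃ Θ : P ≃ₗ[↥S] Es,
      (∀ p : P, (Θ p : A) = (p : Fin 2 → A) 0 * (α + s • β) + (p : Fin 2 → A) 1 * (γ + s • δ)) ∧
      Module.Finite ↥S Es ∧ Module.Projective ↥S Es := by
  have h7' : α*δ = 1 + q•(β*γ) := eq_add_of_sub_eq h7
  have h1' : β*α = q⁻¹ • (α*β) := by rw [h1, smul_smul, inv_mul_cancel₀ hq, one_smul]
  have h2' : γ*α = q⁻¹ • (α*γ) := by rw [h2, smul_smul, inv_mul_cancel₀ hq, one_smul]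
  have h4' : δ*β = q⁻¹ • (β*δ) := by rw [h4, smul_smul, inv_mul_cancel₀ hq, one_smul]
  have h5' : δ*γ = q⁻¹ • (γ*δ) := by rw [h5, smul_smul, inv_mul_cancel₀ hq, one_smul]
  have h6' : δ*α = 1 + q⁻¹•(β*γ) := by
    have h6'' : δ*α = α*δ - (q - q⁻¹) • (β*γ) := by rw [h6]; abel
    rw [h6'', h7']
    match_scalars <;> (field_simp; try ring) <;> tauto
  set u : Fin 2 → A := ![α + s • β, γ + s • δ] with hu
  set w : Fin 2 → A := ![δ - (s*q) • γ, s • α - q⁻¹ • β] with hw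
  set c : k := ((1:k)+s^2)⁻¹ with hc
  set r : Fin 2 → (Fin 2 → A) := fun i => (fun j => esMat q s α β γ δ i j) with hr
  -- the four entry identities
  have hid00 : u 0 * w 0 = 1 - zetaE q s α β γ δ := by
    show (α + s•β) * (δ - (s*q)•γ) = _
    rw [zetaE]
    simp only [mul_sub, sub_mul, mul_add, add_mul, smul_mul_assoc, mul_smul_comm, smul_smul]
    rw [h7']
    module
  have hid01 : u 0 * w 1 = xiE q s α β := by
    show (α + s•β) * (s•α - q⁻¹•β) = _
    rw [xiE]
    simp only [mul_sub, sub_mul, mul_add, add_mul, smul_mul_assoc, mul_smul_comm, smul_smul,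
      pow_two]
    rw [h1']
    module
  have hid10 : u 1 * w 0 = -etaE q s γ δ := by
    show (γ + s•δ) * (δ - (s*q)•γ) = _
    rw [etaE]
    simp only [mul_sub, sub_mul, mul_add, add_mul, smul_mul_assoc, mul_smul_comm, smul_smul,
      pow_two]
    rw [h5']
    match_scalars <;> (field_simp; try ring) <;> tauto
  have hid11 : u 1 * w 1 = (s^2) • (1:A) + (q^2)⁻¹ • zetaE q s α β γ δ := by
    show (γ + s•δ) * (s•α - q⁻¹•β) = _
    rw [zetaE]
    simp only [mul_sub, sub_mul, mul_add, add_mul, smul_mul_assoc, mul_smul_comm, smul_smul]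
    rw [h2', h4', h6', h3]
    match_scalars <;> (field_simp; try ring) <;> tauto
  have hidE : w 0 * u 0 + w 1 * u 1 = ((1:k)+s^2) • (1:A) := by
    show (δ - (s*q)•γ) * (α + s•β) + (s•α - q⁻¹•β) * (γ + s•δ) = _
    simp only [mul_sub, sub_mul, mul_add, add_mul, smul_mul_assoc, mul_smul_comm, smul_smul]
    rw [h7', h2', h4', h6', h3]
    match_scalars <;> (field_simp; try ring) <;> tauto
  -- entries of esMat
  have hmat00 : esMat q s α β γ δ 0 0 = c • (u 0 * w 0) := by
    rw [hid00]; simp [esMat, hc]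
  have hmat01 : esMat q s α β γ δ 0 1 = c • (u 0 * w 1) := by
    rw [hid01]; simp [esMat, hc]
  have hmat10 : esMat q s α β γ δ 1 0 = c • (u 1 * w 0) := by
    rw [hid10]; simp [esMat, hc]
  have hmat11 : esMat q s α β γ δ 1 1 = c • (u 1 * w 1) := by
    rw [hid11]; simp [esMat, hc]
  have hmat : ∀ i j, esMat q s α β γ δ i j = c • (u i * w j) := by
    intro i j
    fin_cases i <;> fin_cases j
    exacts [hmat00, hmat01, hmat10, hmat11]
  set S := Algebra.adjoin k {xiE q s α β, etaE q s γ δ, zetaE q s α β γ δ} with hS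
  have hξ : xiE q s α β ∈ S := Algebra.subset_adjoin (by simp)
  have hη : etaE q s γ δ ∈ S := Algebra.subset_adjoin (by simp)
  have hζ : zetaE q s α β γ δ ∈ S := Algebra.subset_adjoin (by simp)
  have hrS : ∀ i j, r i j ∈ S := by
    have m00 : esMat q s α β γ δ 0 0 ∈ S := by
      have : esMat q s α β γ δ 0 0 = c • (1 - zetaE q s α β γ δ) := by simp [esMat, hc]
      rw [this]; exact S.smul_mem (S.sub_mem S.one_mem hζ) _
    have m01 : esMat q s α β γ δ 0 1 ∈ S := by
      have : esMat q s α β γ δ 0 1 = c • (xiE q s α β) := by simp [esMat, hc]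
      rw [this]; exact S.smul_mem hξ _
    have m10 : esMat q s α β γ δ 1 0 ∈ S := by
      have : esMat q s α β γ δ 1 0 = c • (-etaE q s γ δ) := by simp [esMat, hc]
      rw [this]; exact S.smul_mem (S.neg_mem hη) _
    have m11 : esMat q s α β γ δ 1 1 ∈ S := by
      have : esMat q s α β γ δ 1 1 =
          c • ((s^2) • (1:A) + (q^2)⁻¹ • zetaE q s α β γ δ) := by simp [esMat, hc]
      rw [this]
      exact S.smul_mem (S.add_mem (S.smul_mem S.one_mem _) (S.smul_mem hζ _)) _
    intro i j
    fin_cases i <;> fin_cases j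
    exacts [m00, m01, m10, m11]
  have hPsi : ∀ i j, c • (u i * w j) = r i j := fun i j => (hmat i j).symm
  have hPhi : ∀ i, r i 0 * u 0 + r i 1 * u 1 = u i := by
    intro i
    have e0 : r i 0 = c • (u i * w 0) := hmat i 0
    have e1 : r i 1 = c • (u i * w 1) := hmat i 1
    rw [e0, e1, smul_mul_assoc, smul_mul_assoc, ← smul_add, mul_assoc, mul_assoc, ← mul_add,
      hidE, mul_smul_comm, mul_one, smul_smul, hc, inv_mul_cancel₀ hs, one_smul]
  exact myaux S u w c r hrS hPhi hPsi
end

section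
/- In SU_q(2), the element g⁻₁ = δ - sγ has group-like image in the quotient coalgebra C_s = SU_q(2)/J_s: Δ(δ - sγ) ≡ (δ - sγ) ⊗ (δ - sγ) modulo SU_q(2) ⊗ J_s. -/
open scoped TensorProduct

/-! `Δ(δ - sγ) - (δ - sγ) ⊗ (δ - sγ)` collapses to `γ ⊗ (β - sα + sδ - s²γ)`, and the second
factor lies in `J_s` because it equals `(ξ - s)(sγ - δ) + ζ(β - sα)`: after reducing words with
the `SU_q(2)` relations, all terms of degree three cancel. -/

theorem map_sub_smul_sub_tmul_eq_tmul {R M : Type*} [CommRing R] [AddCommGroup M] [Module R M]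
    (Δ : M →ₗ[R] M ⊗[R] M) (s : R) (a b c d : M)
    (hΔc : Δ c = c ⊗ₜ[R] a + d ⊗ₜ[R] c) (hΔd : Δ d = c ⊗ₜ[R] b + d ⊗ₜ[R] d) :
    Δ (d - s • c) - (d - s • c) ⊗ₜ[R] (d - s • c) = c ⊗ₜ[R] (b - s • a + s • d - s ^ 2 • c) := by
  rw [map_sub, map_smul, hΔd, hΔc]
  simp only [TensorProduct.tmul_sub, TensorProduct.sub_tmul, TensorProduct.tmul_add,
    TensorProduct.smul_tmul, TensorProduct.tmul_smul]
  module

theorem xiE_sub_mul_add_zetaE_mul {k A : Type*} [Field k] [Ring A] [Algebra k A]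
    {q : k} (s : k) {α β γ δ : A}
    (h1 : α*β = q • (β*α)) (h2 : α*γ = q • (γ*α)) (h3 : β*γ = γ*β)
    (h4 : β*δ = q • (δ*β)) (h6 : α*δ = δ*α + (q - q⁻¹) • (β*γ)) (h7 : α*δ - q • (β*γ) = 1)
    (hq : q ≠ 0) :
    (xiE q s α β - s • 1) * (s • γ - δ) + zetaE q s α β γ δ * (β - s • α) =
      β - s • α + s • δ - s ^ 2 • γ := by
  have hγα : γ*α = q⁻¹ • (α*γ) := by rw [h2, smul_smul, inv_mul_cancel₀ hq, one_smul]
  have hβα : β*α = q⁻¹ • (α*β) := by rw [h1, smul_smul, inv_mul_cancel₀ hq, one_smul]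
  have hδβ : δ*β = q⁻¹ • (β*δ) := by rw [h4, smul_smul, inv_mul_cancel₀ hq, one_smul]
  have hαδ : α*δ = 1 + q • (β*γ) := by rw [← h7]; abel
  have hδα : δ*α = 1 + q⁻¹ • (β*γ) := by
    rw [eq_sub_of_add_eq h6.symm, hαδ]
    module
  have hααδ : α*(α*δ) = α + q • (α*(β*γ)) := by rw [hαδ, mul_add, mul_one, mul_smul_comm]
  have hαβδ : α*(β*δ) = q • β + (q*q) • (β*(β*γ)) := by
    rw [h4, mul_smul_comm, ← mul_assoc, hαδ, add_mul, one_mul, smul_mul_assoc,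
      mul_assoc, ← h3, smul_add, smul_smul]
  have hβδβ : β*(δ*β) = q⁻¹ • (β*(β*δ)) := by rw [hδβ, mul_smul_comm]
  have hαγα : α*(γ*α) = q⁻¹ • (α*(α*γ)) := by rw [hγα, mul_smul_comm]
  have hβδα : β*(δ*α) = β + q⁻¹ • (β*(β*γ)) := by rw [hδα, mul_add, mul_one, mul_smul_comm]
  have hβγα : β*(γ*α) = (q⁻¹*q⁻¹) • (α*(β*γ)) := by
    rw [hγα, mul_smul_comm, ← mul_assoc, hβα, smul_mul_assoc, mul_assoc, smul_smul]
  simp only [xiE, zetaE, pow_two, sub_mul, add_mul, mul_sub, smul_mul_assoc, mul_smul_comm,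
    one_mul, mul_assoc]
  rw [hααδ, hαβδ, ← h3, hβδβ, hαγα, hβδα, hβγα]
  match_scalars <;> field_simp <;> ring

theorem stmt9_general {k A : Type*} [Field k] [Ring A] [Algebra k A]
    (q s : k) (α β γ δ : A)
    (h1 : α*β = q • (β*α)) (h2 : α*γ = q • (γ*α)) (h3 : β*γ = γ*β)
    (h4 : β*δ = q • (δ*β))
    (h6 : α*δ = δ*α + (q - q⁻¹) • (β*γ)) (h7 : α*δ - q • (β*γ) = 1)
    (hq : q ≠ 0) (Δ : A →ₐ[k] A ⊗[k] A)
    (hΔγ : Δ γ = γ ⊗ₜ[k] α + δ ⊗ₜ[k] γ) (hΔδ : Δ δ = γ ⊗ₜ[k] β + δ ⊗ₜ[k] δ) :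
    Δ (δ - s • γ) - (δ - s • γ) ⊗ₜ[k] (δ - s • γ) ∈ Submodule.span k {x : A ⊗[k] A | ∃ p z : A, z ∈ Jideal q s α β γ δ ∧ x = p ⊗ₜ[k] z} := by
  have hJ : β - s • α + s • δ - s ^ 2 • γ ∈ Jideal q s α β γ δ :=
    ⟨s • γ - δ, 0, β - s • α, by
      rw [mul_zero, add_zero, xiE_sub_mul_add_zetaE_mul s h1 h2 h3 h4 h6 h7 hq]⟩
  exact Submodule.subset_span
    ⟨γ, _, hJ, map_sub_smul_sub_tmul_eq_tmul Δ.toLinearMap s α β γ δ hΔγ hΔδ⟩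

theorem stmt9 {k A : Type*} [Field k] [Ring A] [Algebra k A]
    (q s : k) (α β γ δ : A)
    (h1 : α*β = q • (β*α)) (h2 : α*γ = q • (γ*α)) (h3 : β*γ = γ*β)
    (h4 : β*δ = q • (δ*β)) (h5 : γ*δ = q • (δ*γ))
    (h6 : α*δ = δ*α + (q - q⁻¹) • (β*γ)) (h7 : α*δ - q • (β*γ) = 1)
    (hq : q ≠ 0) (Δ : A →ₐ[k] A ⊗[k] A)
    (hΔα : Δ α = α ⊗ₜ[k] α + β ⊗ₜ[k] γ) (hΔβ : Δ β = α ⊗ₜ[k] β + β ⊗ₜ[k] δ)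
    (hΔγ : Δ γ = γ ⊗ₜ[k] α + δ ⊗ₜ[k] γ) (hΔδ : Δ δ = γ ⊗ₜ[k] β + δ ⊗ₜ[k] δ) :
    Δ (δ - s • γ) - (δ - s • γ) ⊗ₜ[k] (δ - s • γ) ∈ Submodule.span k {x : A ⊗[k] A | ∃ p z : A, z ∈ Jideal q s α β γ δ ∧ x = p ⊗ₜ[k] z} :=
  stmt9_general q s α β γ δ h1 h2 h3 h4 h6 h7 hq Δ hΔγ hΔδ
end

section
/- For all u = x(α+sβ) + y(γ+sδ) with x, y ∈ S²_{qs}, the covariant derivative ∇(u) = du - u·ω(g⁺₁), where ω(g⁺₁) = (1/(1+s²))((δ-qsγ)d(α+sβ) + (sα-q^{-1}β)d(γ+sδ)) and d is the universal differential dp = 1⊗p - p⊗1 in Ω¹SU_q(2) ⊆ SU_q(2)⊗SU_q(2), equals ((dx, dy) + (x,y)de_s)·(α+sβ, γ+sδ)ᵗ, where de_s is applied entrywise. In particular, under the identification Θ_s, ∇ equals the Grassmannian connection ∇((x,y)e_s) = (d(x,y) + (x,y)de_s)e_s. -/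
/-!
Write `v = (α + sβ, γ + sδ)ᵗ` and `w = (δ - qsγ, sα - q⁻¹β)`. The commutation relations give
`w v = 1 + s²` and `e_s = (1 + s²)⁻¹ v w`, so `e_s` is a rank-one idempotent and
`ω(g⁺₁) = (1 + s²)⁻¹ w dv`. For any factorization `e = v w` with `w v = 1`, the Leibniz rule
and `d1 = 0` give `Σ_i d(e_ji) v_i = dv_j - v_j (w dv)`, which turns the Grassmannian
connection `(dx + x de) v` into `d(xv) - xv (w dv)`.
-/

open scoped TensorProduct

namespace UniversalCalculus

variable (R : Type*) {A : Type*} [CommRing R] [Ring A] [Algebra R A]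

def universalD : A →ₗ[R] A ⊗[R] A :=
  TensorProduct.mk R A A 1 - (TensorProduct.mk R A A).flip 1

variable {R}

theorem universalD_apply (p : A) : universalD R p = 1 ⊗ₜ p - p ⊗ₜ 1 := rfl

theorem universalD_one : universalD R (1 : A) = 0 :=
  sub_self ((1 : A) ⊗ₜ[R] (1 : A))

theorem universalD_mul (p p' : A) :
    universalD R (p * p') = universalD R p * (1 ⊗ₜ p') + (p ⊗ₜ 1) * universalD R p' := by
  simp only [universalD_apply, sub_mul, mul_sub, Algebra.TensorProduct.tmul_mul_tmul, mul_one,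
    one_mul]
  abel

theorem sum_universalD_mul_tmul {ι : Type*} [Fintype ι] (w v : ι → A) :
    ∑ i, universalD R (w i) * (1 ⊗ₜ v i) =
      universalD R (∑ i, w i * v i) - ∑ i, (w i ⊗ₜ 1) * universalD R (v i) := by
  simp only [map_sum, universalD_mul, Finset.sum_add_distrib, add_sub_cancel_right]

theorem connection_eq_grassmannian {ι : Type*} [Fintype ι] (v w x : ι → A)
    (hwv : ∑ i, w i * v i = 1) :
    universalD R (∑ i, x i * v i) -
        ((∑ i, x i * v i) ⊗ₜ[R] 1) * ∑ j, (w j ⊗ₜ 1) * universalD R (v j) =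
      ∑ i, (universalD R (x i) + ∑ j, (x j ⊗ₜ 1) * universalD R (Matrix.vecMulVec v w j i)) *
        (1 ⊗ₜ v i) := by
  set ω := ∑ j, (w j ⊗ₜ[R] 1) * universalD R (v j)
  have hcol : ∀ j, ∑ i, universalD R (v j * w i) * (1 ⊗ₜ v i) =
      universalD R (v j) - (v j ⊗ₜ 1) * ω := by
    intro j
    simp only [universalD_mul, add_mul, Finset.sum_add_distrib, mul_assoc,
      Algebra.TensorProduct.tmul_mul_tmul, mul_one, ← Finset.mul_sum, ← TensorProduct.tmul_sum,
      hwv, Algebra.TensorProduct.one_def.symm, sum_universalD_mul_tmul, universalD_one]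
    noncomm_ring
  calc _ = ∑ i, (universalD R (x i) * (1 ⊗ₜ v i) +
        (x i ⊗ₜ 1) * (universalD R (v i) - (v i ⊗ₜ 1) * ω)) := by
        simp only [map_sum, universalD_mul, TensorProduct.sum_tmul, Finset.sum_mul,
          Finset.sum_sub_distrib, mul_sub, Finset.sum_add_distrib, ← mul_assoc,
          Algebra.TensorProduct.tmul_mul_tmul, mul_one]
        abel
    _ = _ := by
        simp only [add_mul, Finset.sum_add_distrib, Finset.sum_mul, Matrix.vecMulVec_apply]
        rw [Finset.sum_comm]
        simp only [mul_assoc, ← Finset.mul_sum, hcol]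

end UniversalCalculus

section QuantumSU2

variable {k A : Type*} [Field k] [Ring A] [Algebra k A] {q s : k} {α β γ δ : A}

theorem row_mul_col_eq_one_add_sq
    (h2 : α*γ = q • (γ*α)) (h3 : β*γ = γ*β) (h4 : β*δ = q • (δ*β))
    (h6 : α*δ = δ*α + (q - q⁻¹) • (β*γ)) (h7 : α*δ - q • (β*γ) = 1) (hq : q ≠ 0) :
    (δ - (q*s) • γ) * (α + s • β) + (s • α - q⁻¹ • β) * (γ + s • δ) = (1 + s^2) • 1 := by
  have hga : γ*α = q⁻¹ • (α*γ) := (eq_inv_smul_iff₀ hq).2 h2.symm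
  have hdb : δ*β = q⁻¹ • (β*δ) := (eq_inv_smul_iff₀ hq).2 h4.symm
  have hda : δ*α = α*δ - (q - q⁻¹) • (β*γ) := eq_sub_of_add_eq h6.symm
  have had : α*δ = 1 + q • (β*γ) := eq_add_of_sub_eq h7
  simp only [mul_add, sub_mul, smul_mul_assoc, mul_smul_comm, smul_add, smul_sub, smul_smul,
    hga, hdb, hda, had, ← h3]
  match_scalars <;> field_simp <;> ring

theorem esMat_eq_vecMulVec
    (h1 : α*β = q • (β*α)) (h2 : α*γ = q • (γ*α)) (h3 : β*γ = γ*β)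
    (h4 : β*δ = q • (δ*β)) (h5 : γ*δ = q • (δ*γ))
    (h6 : α*δ = δ*α + (q - q⁻¹) • (β*γ)) (h7 : α*δ - q • (β*γ) = 1) (hq : q ≠ 0) :
    esMat q s α β γ δ = (1 + s^2)⁻¹ •
      Matrix.vecMulVec ![α + s • β, γ + s • δ] ![δ - (q*s) • γ, s • α - q⁻¹ • β] := by
  have hba : β*α = q⁻¹ • (α*β) := (eq_inv_smul_iff₀ hq).2 h1.symm
  have hga : γ*α = q⁻¹ • (α*γ) := (eq_inv_smul_iff₀ hq).2 h2.symm
  have hdb : δ*β = q⁻¹ • (β*δ) := (eq_inv_smul_iff₀ hq).2 h4.symm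
  have hdg : δ*γ = q⁻¹ • (γ*δ) := (eq_inv_smul_iff₀ hq).2 h5.symm
  have hda : δ*α = α*δ - (q - q⁻¹) • (β*γ) := eq_sub_of_add_eq h6.symm
  have had : α*δ = 1 + q • (β*γ) := eq_add_of_sub_eq h7
  ext i j
  fin_cases i <;> fin_cases j <;>
    simp only [esMat, Matrix.smul_apply, Matrix.vecMulVec_apply, Matrix.of_apply,
      Matrix.cons_val', Matrix.cons_val_zero, Matrix.cons_val_one, Matrix.cons_val_fin_one,
      Fin.zero_eta, Fin.mk_one] <;>
    congr 1 <;>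
    simp only [xiE, etaE, zetaE, pow_two, add_mul, sub_mul, mul_sub, smul_mul_assoc,
      mul_smul_comm, smul_add, smul_sub, smul_smul, neg_add, neg_sub, hba, hga, ← h3, hdb, hdg,
      hda, had] <;>
    match_scalars <;> field_simp <;> ring

end QuantumSU2

open UniversalCalculus in
theorem stmt11 {k A : Type*} [Field k] [Ring A] [Algebra k A]
    (q s : k) (α β γ δ : A)
    (h1 : α*β = q • (β*α)) (h2 : α*γ = q • (γ*α)) (h3 : β*γ = γ*β)
    (h4 : β*δ = q • (δ*β)) (h5 : γ*δ = q • (δ*γ))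
    (h6 : α*δ = δ*α + (q - q⁻¹) • (β*γ)) (h7 : α*δ - q • (β*γ) = 1)
    (hq : q ≠ 0) (hs : (1:k) + s^2 ≠ 0) :
    letI D : A → A ⊗[k] A := fun p => (1:A) ⊗ₜ[k] p - p ⊗ₜ[k] (1:A)
    letI ω : A ⊗[k] A := (1 + s^2)⁻¹ •
      (((δ - (q*s) • γ) ⊗ₜ[k] (1:A)) * D (α + s • β) +
       ((s • α - q⁻¹ • β) ⊗ₜ[k] (1:A)) * D (γ + s • δ))
    ∀ x y : A, x ∈ Algebra.adjoin k {xiE q s α β, etaE q s γ δ, zetaE q s α β γ δ} → y ∈ Algebra.adjoin k {xiE q s α β, etaE q s γ δ, zetaE q s α β γ δ} →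
      D (x * (α + s • β) + y * (γ + s • δ)) -
        ((x * (α + s • β) + y * (γ + s • δ)) ⊗ₜ[k] (1:A)) * ω =
      ∑ i : Fin 2,
        (D (![x, y] i) + ∑ j : Fin 2, ((![x, y] j) ⊗ₜ[k] (1:A)) * D (esMat q s α β γ δ j i)) *
          ((1:A) ⊗ₜ[k] (![α + s • β, γ + s • δ] i)) := by
  intro x y _ _
  simp only [← universalD_apply]
  set v : Fin 2 → A := ![α + s • β, γ + s • δ]
  set w : Fin 2 → A := (1 + s^2)⁻¹ • ![δ - (q*s) • γ, s • α - q⁻¹ • β]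
  have hwv : ∑ i, w i * v i = 1 := by
    simp only [w, v, Fin.sum_univ_two, Pi.smul_apply, Matrix.cons_val_zero, Matrix.cons_val_one,
      Matrix.cons_val_fin_one, smul_mul_assoc, ← smul_add,
      row_mul_col_eq_one_add_sq h2 h3 h4 h6 h7 hq, smul_smul, inv_mul_cancel₀ hs, one_smul]
  have hω : (1 + s^2)⁻¹ • (((δ - (q*s) • γ) ⊗ₜ[k] (1:A)) * universalD k (α + s • β) +
      ((s • α - q⁻¹ • β) ⊗ₜ[k] (1:A)) * universalD k (γ + s • δ)) =
      ∑ j, (w j ⊗ₜ 1) * universalD k (v j) := by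
    simp only [w, v, Fin.sum_univ_two, Pi.smul_apply, Matrix.cons_val_zero,
      Matrix.cons_val_one, Matrix.cons_val_fin_one, ← TensorProduct.smul_tmul', smul_mul_assoc,
      smul_add]
  have hu : x * (α + s • β) + y * (γ + s • δ) = ∑ i, ![x, y] i * v i := by
    simp [v, Fin.sum_univ_two]
  rw [hω, hu, esMat_eq_vecMulVec h1 h2 h3 h4 h5 h6 h7 hq, ← Matrix.vecMulVec_smul]
  exact connection_eq_grassmannian v w ![x, y] hwv
end
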